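/- Let f ∈ ℍ[t] be a polynomial over the quaternions and let α ∈ ℍ. Then at least one of the following holds: (a) no element of the similarity class [α] is a right root of f and no element of [α] is a left root of f; (b) there is exactly one element of [α] that is a right root of f and exactly one element of [α] that is a left root of f; (c) every element of [α] is both a right root and a left root of f. -/

import Mathlib

/-!
Every element of the similarity class `[α]` is a root of the real quadratic
`χ_α = t² - 2 Re(α) t + |α|²`, whose coefficients are central. Dividing `f` by `χ_α` thus leaves a
remainder `b + a t` that agrees with `f` on `[α]` for both evaluations:
`evʳ_f(β) = b + aβ` and `evˡ_f(β) = b + βa`. If `a = 0`, either every or no element of `[α]` is a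
root, according as `b = 0`. Otherwise the only candidate right root is `x = -a⁻¹b` and the only
candidate left root is `-ba⁻¹ = a x a⁻¹`; being conjugate, they lie in `[α]` together or not at all.
-/

open Polynomial

/-- Right evaluation of a quaternionic polynomial `f` at `β`:
`evʳ_f(β) = Σ_k f_k β^k`, coefficients on the left. -/
noncomputable def evalR (β : Quaternion ℝ) (f : Polynomial (Quaternion ℝ)) : Quaternion ℝ :=
  ∑ k ∈ Finset.range (f.natDegree + 1), f.coeff k * β ^ k

/-- Left evaluation of a quaternionic polynomial `f` at `β`:
`evˡ_f(β) = Σ_k β^k f_k`, coefficients on the right. -/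
noncomputable def evalL (β : Quaternion ℝ) (f : Polynomial (Quaternion ℝ)) : Quaternion ℝ :=
  ∑ k ∈ Finset.range (f.natDegree + 1), β ^ k * f.coeff k

/-- The similarity class of a quaternion `α`: all `γ α γ⁻¹` with `γ ≠ 0`. -/
def simClass (α : Quaternion ℝ) : Set (Quaternion ℝ) :=
  {β | ∃ γ : Quaternion ℝ, γ ≠ 0 ∧ β = γ * α * γ⁻¹}

open MulOpposite
open scoped Quaternion

namespace Polynomial

variable {K A : Type*} [CommRing K] [Ring A] [Algebra K A]

theorem commute_map_algebraMap (p : K[X]) (q : A[X]) : Commute (p.map (algebraMap K A)) q := by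
  induction p using Polynomial.induction_on' with
  | add p p' hp hp' => simpa only [Polynomial.map_add] using hp.add_left hp'
  | monomial n k =>
    rw [map_monomial, ← C_mul_X_pow_eq_monomial, ← algebraMap_apply]
    exact (Algebra.commute_algebraMap_left k q).mul_left (commute_X_pow q n)

theorem eval_add_map_mul_of_aeval_eq_zero {p : K[X]} {x : A} (hx : aeval x p = 0) (r q : A[X]) :
    (r + p.map (algebraMap K A) * q).eval x = r.eval x := by
  rw [(commute_map_algebraMap p q).eq, eval_add, ← eval₂_id (p := q * _),
    eval₂_mul_noncomm _ _ fun k => by simpa using Algebra.commute_algebraMap_left (p.coeff k) x,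
    eval₂_id, eval₂_id, eval_map_algebraMap, hx, mul_zero, add_zero]

theorem opRingEquiv_op_map_algebraMap (p : K[X]) :
    opRingEquiv A (op (p.map (algebraMap K A))) = p.map (algebraMap K Aᵐᵒᵖ) := by
  ext k
  simp [coeff_opRingEquiv, coeff_map, MulOpposite.algebraMap_apply]

end Polynomial

section Trichotomy

variable {D : Type*} [DivisionRing D] {S : Set D}

theorem trichotomy_of_affine (hS : ∀ x ∈ S, ∀ γ : D, γ ≠ 0 → γ * x * γ⁻¹ ∈ S)
    {R L : D → D} {a b : D} (hR : ∀ β ∈ S, R β = b + a * β) (hL : ∀ β ∈ S, L β = b + β * a) :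
    ((∀ β ∈ S, R β ≠ 0) ∧ (∀ β ∈ S, L β ≠ 0)) ∨
    ((∃! β, β ∈ S ∧ R β = 0) ∧ (∃! β, β ∈ S ∧ L β = 0)) ∨
    (∀ β ∈ S, R β = 0 ∧ L β = 0) := by
  rcases eq_or_ne a 0 with rfl | ha
  · rcases eq_or_ne b 0 with rfl | hb
    · exact Or.inr <| Or.inr fun β hβ => by simp [hR β hβ, hL β hβ]
    · exact Or.inl ⟨fun β hβ => by simpa [hR β hβ], fun β hβ => by simpa [hL β hβ]⟩
  set x := a⁻¹ * -b
  have hRx : ∀ β ∈ S, R β = 0 ↔ β = x := fun β hβ => by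
    rw [hR β hβ, add_comm, add_eq_zero_iff_eq_neg, eq_inv_mul_iff_mul_eq₀ ha]
  have hLx : ∀ β ∈ S, L β = 0 ↔ β = a * x * a⁻¹ := fun β hβ => by
    rw [hL β hβ, add_comm, add_eq_zero_iff_eq_neg, mul_inv_cancel_left₀ ha,
      eq_mul_inv_iff_mul_eq₀ ha]
  have hconj : a * x * a⁻¹ ∈ S ↔ x ∈ S := by
    refine ⟨fun h => ?_, fun hx => hS x hx a ha⟩
    simpa [mul_assoc, ha] using hS _ h a⁻¹ (inv_ne_zero ha)
  by_cases hx : x ∈ S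
  · refine Or.inr <| Or.inl ⟨⟨x, ⟨hx, (hRx x hx).2 rfl⟩, fun β hβ => (hRx β hβ.1).1 hβ.2⟩,
      ⟨a * x * a⁻¹, ⟨hconj.2 hx, (hLx _ (hconj.2 hx)).2 rfl⟩, fun β hβ => (hLx β hβ.1).1 hβ.2⟩⟩
  · refine Or.inl ⟨fun β hβ h => hx ?_, fun β hβ h => hx (hconj.1 ?_)⟩
    · rwa [← (hRx β hβ).1 h]
    · rwa [← (hLx β hβ).1 h]

end Trichotomy

namespace Quaternion

noncomputable def charPoly (α : ℍ) : ℝ[X] := X ^ 2 - C (2 * α.re) * X + C (normSq α)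

theorem charPoly_monic (α : ℍ) : (charPoly α).Monic := by
  unfold charPoly; monicity!

theorem natDegree_charPoly (α : ℍ) : (charPoly α).natDegree = 2 := by
  unfold charPoly; compute_degree!

theorem aeval_self_charPoly (α : ℍ) : aeval α (charPoly α) = 0 := by
  have h : (↑(2 * α.re) : ℍ) * α = α ^ 2 + normSq α := by
    rw [← self_add_star', add_mul, star_mul_self, sq]
  rw [charPoly, map_add, map_sub, map_mul, map_pow, aeval_X, aeval_C, aeval_C, algebraMap_def, h]
  abel

theorem aeval_charPoly_of_mem_simClass {α β : ℍ} (hβ : β ∈ simClass α) :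
    aeval β (charPoly α) = 0 := by
  obtain ⟨γ, hγ, rfl⟩ := hβ
  rw [show γ * α * γ⁻¹ = ConjAct.toConjAct (Units.mk0 γ hγ) • α from rfl, aeval_smul,
    aeval_self_charPoly, smul_zero]

end Quaternion

theorem mul_mul_inv_mem_simClass {α x : ℍ} (hx : x ∈ simClass α) {γ : ℍ}
    (hγ : γ ≠ 0) : γ * x * γ⁻¹ ∈ simClass α := by
  obtain ⟨δ, hδ, rfl⟩ := hx
  exact ⟨γ * δ, mul_ne_zero hγ hδ, by simp [mul_inv_rev, mul_assoc]⟩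

theorem evalR_eq_eval (β : ℍ) (f : Polynomial ℍ) : evalR β f = f.eval β :=
  (eval_eq_sum_range β).symm

theorem op_evalL (β : ℍ) (f : Polynomial ℍ) :
    op (evalL β f) = (opRingEquiv _ (op f)).eval (op β) := by
  simp [evalL, eval_eq_sum_range, natDegree_opRingEquiv, coeff_opRingEquiv]

theorem evalR_modByMonic_map {p : ℝ[X]} {β : ℍ} (hβ : aeval β p = 0)
    (f : Polynomial ℍ) : evalR β (f %ₘ p.map (algebraMap ℝ _)) = evalR β f := by
  conv_rhs => rw [← modByMonic_add_div f (p.map (algebraMap ℝ _))]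
  rw [evalR_eq_eval, evalR_eq_eval, eval_add_map_mul_of_aeval_eq_zero hβ]

theorem evalL_modByMonic_map {p : ℝ[X]} {β : ℍ} (hβ : aeval β p = 0)
    (f : Polynomial ℍ) : evalL β (f %ₘ p.map (algebraMap ℝ _)) = evalL β f := by
  apply op_injective
  conv_rhs =>
    rw [← modByMonic_add_div f (p.map (algebraMap ℝ _)), (commute_map_algebraMap p _).eq]
  rw [op_evalL, op_evalL, op_add, op_mul, map_add, map_mul, opRingEquiv_op_map_algebraMap,
    eval_add_map_mul_of_aeval_eq_zero (by rw [aeval_op_apply, hβ, op_zero])]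

theorem evalR_of_natDegree_le_one {r : Polynomial ℍ} (hr : r.natDegree ≤ 1)
    (β : ℍ) : evalR β r = r.coeff 0 + r.coeff 1 * β := by
  rw [evalR_eq_eval, eval_eq_sum_range' (n := 2) (by omega)]
  simp [Finset.sum_range_succ]

theorem evalL_of_natDegree_le_one {r : Polynomial ℍ} (hr : r.natDegree ≤ 1)
    (β : ℍ) : evalL β r = r.coeff 0 + β * r.coeff 1 := by
  apply op_injective
  rw [op_evalL, eval_eq_sum_range' (n := 2) (by rw [natDegree_opRingEquiv, unop_op]; omega)]
  simp [Finset.sum_range_succ, coeff_opRingEquiv]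

theorem exists_affine_evalR_evalL_on_simClass (f : Polynomial ℍ) (α : ℍ) :
    ∃ a b : ℍ, ∀ β ∈ simClass α, evalR β f = b + a * β ∧ evalL β f = b + β * a := by
  set c := (Quaternion.charPoly α).map (algebraMap ℝ ℍ)
  have hc_monic : c.Monic := (Quaternion.charPoly_monic α).map _
  have hc : c.natDegree = 2 := by
    rw [(Quaternion.charPoly_monic α).natDegree_map, Quaternion.natDegree_charPoly]
  have hr : (f %ₘ c).natDegree ≤ 1 := by
    have := natDegree_modByMonic_lt f hc_monic fun h => by rw [h, natDegree_one] at hc; omega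
    omega
  refine ⟨(f %ₘ c).coeff 1, (f %ₘ c).coeff 0, fun β hβ => ?_⟩
  have hχ := Quaternion.aeval_charPoly_of_mem_simClass hβ
  rw [← evalR_modByMonic_map hχ, ← evalL_modByMonic_map hχ, evalR_of_natDegree_le_one hr,
    evalL_of_natDegree_le_one hr]
  exact ⟨rfl, rfl⟩

/-- Trichotomy for roots of a quaternionic polynomial in a similarity class `[α]`:
either `[α]` contains no right roots and no left roots of `f`, or it contains a unique
right root and a unique left root, or every element of `[α]` is both a right and a
left root of `f`. -/
theorem root_trichotomy (f : Polynomial (Quaternion ℝ)) (α : Quaternion ℝ) :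
    ((∀ β ∈ simClass α, evalR β f ≠ 0) ∧ (∀ β ∈ simClass α, evalL β f ≠ 0)) ∨
    ((∃! β : Quaternion ℝ, β ∈ simClass α ∧ evalR β f = 0) ∧
     (∃! β : Quaternion ℝ, β ∈ simClass α ∧ evalL β f = 0)) ∨
    (∀ β ∈ simClass α, evalR β f = 0 ∧ evalL β f = 0) := by
  obtain ⟨a, b, h⟩ := exists_affine_evalR_evalL_on_simClass f α
  exact trichotomy_of_affine (fun _ hx _ hγ => mul_mul_inv_mem_simClass hx hγ)
    (fun β hβ => (h β hβ).1) (fun β hβ => (h β hβ).2)
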